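/- arXiv:2005.03882 — 2 statements merged into one kernel-verified Lean document; each statement's English description precedes it below -/
import Mathlib

section
/- Suppose F : ℝ → ℝ is nondecreasing with 0 ≤ F(x) ≤ F_∞ for all x ∈ ℝ. Let F_p = P_{Δx}F be the piecewise linear projection of F on the grid of mesh Δx > 0. Then F − F_p ∈ L²(ℝ) and ‖F − F_p‖_{L²(ℝ)} ≤ F_∞ · √Δx. -/
/-!
On the cell `[x_j, x_{j+1}]` both `F` (by monotonicity) and its interpolant lie between
`F x_j` and `F x_{j+1}`, so `|F - F_p| ≤ ΔF_j := F x_{j+1} - F x_j ≤ F_∞` there, whence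
`|F - F_p|² ≤ F_∞ ΔF_j`. Integrating cell by cell gives `‖F - F_p‖₂² ≤ F_∞ Δx ∑ⱼ ΔF_j`, and the
increments of `F` telescope to at most `F_∞`.
-/

open MeasureTheory

/-- Piecewise linear projection on the grid of mesh `dx`: the unique function equal to
`f (j * dx)` at every grid point `j * dx` (`j ∈ ℤ`) and affine on each cell
`[j * dx, (j+1) * dx]`. -/
noncomputable def plProj (dx : ℝ) (f : ℝ → ℝ) : ℝ → ℝ := fun x =>
  f ((⌊x / dx⌋ : ℝ) * dx) +
    ((x - (⌊x / dx⌋ : ℝ) * dx) / dx) *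
      (f (((⌊x / dx⌋ : ℝ) + 1) * dx) - f ((⌊x / dx⌋ : ℝ) * dx))

open Set
open scoped ENNReal

def gridIncrement (dx : ℝ) (f : ℝ → ℝ) (j : ℤ) : ℝ := f (((j : ℝ) + 1) * dx) - f ((j : ℝ) * dx)

theorem tsum_ofReal_sub_le_of_monotone {G : ℤ → ℝ} (hG : Monotone G) {a b : ℝ}
    (ha : ∀ j, a ≤ G j) (hb : ∀ j, G j ≤ b) :
    ∑' j, ENNReal.ofReal (G (j + 1) - G j) ≤ ENNReal.ofReal (b - a) := by
  rw [ENNReal.tsum_eq_iSup_sum]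
  refine iSup_le fun t => ?_
  set N : ℕ := t.sup Int.natAbs + 1
  have ht : t ⊆ Finset.Ico (-N : ℤ) N := fun j hj => by
    have := Finset.le_sup (f := Int.natAbs) hj
    simp only [Finset.mem_Ico]
    omega
  have hjump (j : ℤ) : 0 ≤ G (j + 1) - G j := sub_nonneg.2 (hG (by omega))
  calc ∑ j ∈ t, ENNReal.ofReal (G (j + 1) - G j)
      ≤ ∑ j ∈ Finset.Ico (-N : ℤ) N, ENNReal.ofReal (G (j + 1) - G j) :=
        Finset.sum_le_sum_of_subset ht
    _ = ENNReal.ofReal (G N - G (-N)) := by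
        rw [← ENNReal.ofReal_sum_of_nonneg fun j _ => hjump j, ← neg_sub (G (-N)),
          ← Finset.sum_Ico_int_sub, ← Finset.sum_neg_distrib]
        simp only [neg_sub]
    _ ≤ ENNReal.ofReal (b - a) :=
        ENNReal.ofReal_le_ofReal (sub_le_sub (hb _) (ha _))

theorem preimage_floor_div_singleton {dx : ℝ} (hdx : 0 < dx) (j : ℤ) :
    (fun x : ℝ => ⌊x / dx⌋) ⁻¹' {j} = Ico ((j : ℝ) * dx) (((j : ℝ) + 1) * dx) := by
  ext x
  rw [mem_preimage, mem_singleton_iff, Int.floor_eq_iff, mem_Ico, le_div_iff₀ hdx,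
    div_lt_iff₀ hdx]

theorem mem_Ico_floor_div {dx : ℝ} (hdx : 0 < dx) (x : ℝ) :
    x ∈ Ico ((⌊x / dx⌋ : ℝ) * dx) (((⌊x / dx⌋ : ℝ) + 1) * dx) := by
  rw [← preimage_floor_div_singleton hdx]
  rfl

theorem lintegral_comp_floor_div {dx : ℝ} (hdx : 0 < dx) (φ : ℤ → ℝ≥0∞) :
    ∫⁻ x, φ ⌊x / dx⌋ = (∑' j, φ j) * ENNReal.ofReal dx := by
  have hfloor : Measurable fun x : ℝ => ⌊x / dx⌋ :=
    Int.measurable_floor.comp (measurable_id.div_const dx)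
  rw [← lintegral_map (measurable_of_countable φ) hfloor, lintegral_countable',
    ← ENNReal.tsum_mul_right]
  congr 1 with j
  rw [Measure.map_apply hfloor (measurableSet_singleton j), preimage_floor_div_singleton hdx,
    Real.volume_Ico]
  ring_nf

theorem lintegral_gridIncrement_floor_le {F : ℝ → ℝ} (hF : Monotone F) {dx : ℝ} (hdx : 0 < dx)
    {a b : ℝ} (ha : ∀ x, a ≤ F x) (hb : ∀ x, F x ≤ b) :
    ∫⁻ x, ENNReal.ofReal (gridIncrement dx F ⌊x / dx⌋) ≤
      ENNReal.ofReal (b - a) * ENNReal.ofReal dx := by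
  have hG : Monotone fun j : ℤ => F (j * dx) := hF.comp fun i j hij => by gcongr
  rw [lintegral_comp_floor_div hdx fun j => ENNReal.ofReal (gridIncrement dx F j)]
  gcongr
  simpa [gridIncrement] using tsum_ofReal_sub_le_of_monotone hG (fun j => ha _) (fun j => hb _)

theorem measurable_plProj {f : ℝ → ℝ} (hf : Measurable f) (dx : ℝ) :
    Measurable (plProj dx f) := by
  unfold plProj
  fun_prop

theorem abs_sub_plProj_le {F : ℝ → ℝ} (hF : Monotone F) {dx : ℝ} (hdx : 0 < dx) (x : ℝ) :
    |F x - plProj dx F x| ≤ gridIncrement dx F ⌊x / dx⌋ := by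
  set a := (⌊x / dx⌋ : ℝ) * dx
  set b := ((⌊x / dx⌋ : ℝ) + 1) * dx
  set t := (x - a) / dx
  obtain ⟨hax, hxb⟩ := mem_Ico_floor_div hdx x
  have ht0 : 0 ≤ t := div_nonneg (sub_nonneg.2 hax) hdx.le
  have ht1 : t ≤ 1 := (div_le_one hdx).2 (by linarith)
  have hjump : 0 ≤ F b - F a := sub_nonneg.2 (hF (by linarith))
  have hP : plProj dx F x ∈ Icc (F a) (F b) := by
    change F a + t * (F b - F a) ∈ Icc (F a) (F b)
    constructor <;> nlinarith
  exact Real.dist_le_of_mem_Icc ⟨hF hax, hF hxb.le⟩ hP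

theorem sq_sub_plProj_le {F : ℝ → ℝ} (hF : Monotone F) {dx : ℝ} (hdx : 0 < dx) {a b : ℝ}
    (ha : ∀ x, a ≤ F x) (hb : ∀ x, F x ≤ b) (x : ℝ) :
    (F x - plProj dx F x) ^ 2 ≤ (b - a) * gridIncrement dx F ⌊x / dx⌋ := by
  have hgap := abs_sub_plProj_le hF hdx x
  have hinc : gridIncrement dx F ⌊x / dx⌋ ≤ b - a := sub_le_sub (hb _) (ha _)
  rw [← sq_abs, sq]
  exact mul_le_mul (hgap.trans hinc) hgap (abs_nonneg _) (sub_nonneg.2 ((ha 0).trans (hb 0)))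

theorem eLpNorm_two_le_of_lintegral_sq_le {α E : Type*} [MeasurableSpace α] {μ : Measure α}
    [NormedAddCommGroup E] {f : α → E} {c : ℝ≥0∞} (h : ∫⁻ x, ‖f x‖ₑ ^ 2 ∂μ ≤ c ^ 2) :
    eLpNorm f 2 μ ≤ c := by
  have := eLpNorm_nnreal_pow_eq_lintegral (f := f) (μ := μ) (p := 2) two_ne_zero
  simp only [NNReal.coe_ofNat, ENNReal.rpow_two, ENNReal.coe_ofNat] at this
  rwa [← ENNReal.pow_le_pow_left_iff two_ne_zero, this]

theorem projection_estimate_F_L2_general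
    (F : ℝ → ℝ) (Finf : ℝ)
    (hFmono : Monotone F)
    (hF0 : ∀ x, 0 ≤ F x) (hFle : ∀ x, F x ≤ Finf)
    (dx : ℝ) (hdx : 0 < dx) :
    MemLp (fun x => F x - plProj dx F x) 2 volume ∧
      eLpNorm (fun x => F x - plProj dx F x) 2 volume ≤
        ENNReal.ofReal (Finf * Real.sqrt dx) := by
  have hFinf : 0 ≤ Finf := (hF0 0).trans (hFle 0)
  have hsq (x : ℝ) : ‖F x - plProj dx F x‖ₑ ^ 2 ≤
      ENNReal.ofReal Finf * ENNReal.ofReal (gridIncrement dx F ⌊x / dx⌋) := by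
    have := sq_sub_plProj_le hFmono hdx hF0 hFle x
    rw [sub_zero] at this
    rw [Real.enorm_eq_ofReal_abs, ← ENNReal.ofReal_pow (abs_nonneg _), sq_abs,
      ← ENNReal.ofReal_mul hFinf]
    exact ENNReal.ofReal_le_ofReal this
  have hbound : eLpNorm (fun x => F x - plProj dx F x) 2 volume ≤
      ENNReal.ofReal (Finf * Real.sqrt dx) := by
    refine eLpNorm_two_le_of_lintegral_sq_le ?_
    calc ∫⁻ x, ‖F x - plProj dx F x‖ₑ ^ 2
        ≤ ENNReal.ofReal Finf * ∫⁻ x, ENNReal.ofReal (gridIncrement dx F ⌊x / dx⌋) := by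
          rw [← lintegral_const_mul' _ _ ENNReal.ofReal_ne_top]
          exact lintegral_mono hsq
      _ ≤ ENNReal.ofReal Finf * (ENNReal.ofReal Finf * ENNReal.ofReal dx) := by
          gcongr
          simpa using lintegral_gridIncrement_floor_le hFmono hdx hF0 hFle
      _ = ENNReal.ofReal (Finf * Real.sqrt dx) ^ 2 := by
          rw [← ENNReal.ofReal_mul hFinf, ← ENNReal.ofReal_mul hFinf,
            ← ENNReal.ofReal_pow (by positivity), mul_pow, Real.sq_sqrt hdx.le, sq, mul_assoc]
  have hmeas := hFmono.measurable.sub (measurable_plProj hFmono.measurable dx)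
  exact ⟨⟨hmeas.aestronglyMeasurable, hbound.trans_lt ENNReal.ofReal_lt_top⟩, hbound⟩

/-- Fourth projection estimate: `F - P_{Δx} F ∈ L²(ℝ)` and `‖F - P_{Δx} F‖_2 ≤ F_∞ √Δx`. -/
theorem projection_estimate_F_L2
    (F : ℝ → ℝ) (Finf : ℝ) (hFinf : 0 < Finf)
    (hFmono : Monotone F)
    (hF0 : ∀ x, 0 ≤ F x) (hFle : ∀ x, F x ≤ Finf)
    (dx : ℝ) (hdx : 0 < dx) :
    MemLp (fun x => F x - plProj dx F x) 2 volume ∧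
      eLpNorm (fun x => F x - plProj dx F x) 2 volume ≤
        ENNReal.ofReal (Finf * Real.sqrt dx) :=
  projection_estimate_F_L2_general F Finf hFmono hF0 hFle dx hdx
end

section
/- Suppose u : ℝ → ℝ is locally absolutely continuous with derivative u_x, F : ℝ → ℝ is nondecreasing, and ∫_a^b u_x(z)² dz ≤ F(b) − F(a) for all a ≤ b. Let Δx > 0 and let u_p = P_{Δx}u, F_p = P_{Δx}F be the piecewise linear projections on the grid of mesh Δx. Then ∫_a^b (u_p)_x(z)² dz ≤ F_p(b) − F_p(a) for all a ≤ b, where (u_p)_x denotes the (almost everywhere defined) derivative of u_p. -/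
/-!
On a cell `[p, p + dx]` the projection of `u` is affine with slope
`(u (p + dx) - u p) / dx = (∫ ux) / dx`; by Cauchy–Schwarz its square is at most
`(∫ ux²) / dx ≤ (F (p + dx) - F p) / dx`, the slope of the projection of `F` on the same cell.
Off the (null) grid the derivative of the projection of `u` is this slope, and the projection of
`F` is continuous with this nonnegative slope as right derivative everywhere, so it is the integral
of its slope; integrating the cellwise inequality over `[a, b]` gives the claim.
-/

open MeasureTheory intervalIntegral

open Set Filter Topology

theorem sq_intervalIntegral_le_mul_integral_sq {f : ℝ → ℝ} {a b : ℝ} (hab : a ≤ b)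
    (hf2 : IntervalIntegrable (fun x => f x ^ 2) volume a b) :
    (∫ x in a..b, f x) ^ 2 ≤ (b - a) * ∫ x in a..b, f x ^ 2 := by
  have hJ : 0 ≤ ∫ x in a..b, f x ^ 2 :=
    intervalIntegral.integral_nonneg hab fun x _ => sq_nonneg (f x)
  by_cases hf : IntervalIntegrable f volume a b
  swap
  · -- the integral of a non-integrable `f` is `0` by convention
    rw [intervalIntegral.integral_undef hf]
    simpa using mul_nonneg (sub_nonneg.2 hab) hJ
  rcases hab.eq_or_lt with rfl | hlt
  · simp
  set L := b - a
  set I := ∫ x in a..b, f x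
  set J := ∫ x in a..b, f x ^ 2
  have hexpand : ∫ x in a..b, (L * f x - I) ^ 2 = L * (L * J - I ^ 2) := by
    have hlin : (fun x => (L * f x - I) ^ 2) =
        fun x => L ^ 2 * f x ^ 2 - 2 * L * I * f x + I ^ 2 := by
      funext x; ring
    rw [hlin, intervalIntegral.integral_add ((hf2.const_mul _).sub (hf.const_mul _))
        intervalIntegrable_const, intervalIntegral.integral_sub (hf2.const_mul _) (hf.const_mul _),
      intervalIntegral.integral_const_mul, intervalIntegral.integral_const_mul,
      intervalIntegral.integral_const, smul_eq_mul]
    ring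
  have hnonneg : 0 ≤ L * (L * J - I ^ 2) :=
    hexpand ▸ intervalIntegral.integral_nonneg hab fun x _ => sq_nonneg _
  nlinarith [(mul_nonneg_iff_of_pos_left (sub_pos.2 hlt)).1 hnonneg]

theorem sq_slope_le_slope_of_sq_integral_le {u ux F : ℝ → ℝ} {a b : ℝ} (hab : a < b)
    (hux2 : IntervalIntegrable (fun z => ux z ^ 2) volume a b)
    (hFTC : u b - u a = ∫ z in a..b, ux z) (hE : ∫ z in a..b, ux z ^ 2 ≤ F b - F a) :
    ((u b - u a) / (b - a)) ^ 2 ≤ (F b - F a) / (b - a) := by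
  have hL : 0 < b - a := sub_pos.2 hab
  calc ((u b - u a) / (b - a)) ^ 2
      = (∫ z in a..b, ux z) ^ 2 / (b - a) ^ 2 := by rw [hFTC, div_pow]
    _ ≤ (b - a) * (∫ z in a..b, ux z ^ 2) / (b - a) ^ 2 := by
        gcongr; exact sq_intervalIntegral_le_mul_integral_sq hab.le hux2
    _ = (∫ z in a..b, ux z ^ 2) / (b - a) := by field_simp
    _ ≤ (F b - F a) / (b - a) := by gcongr

noncomputable def cellAffine (dx : ℝ) (f : ℝ → ℝ) (j : ℤ) (x : ℝ) : ℝ :=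
  f ((j : ℝ) * dx) + ((x - (j : ℝ) * dx) / dx) * (f (((j : ℝ) + 1) * dx) - f ((j : ℝ) * dx))

noncomputable def cellSlope (dx : ℝ) (f : ℝ → ℝ) (j : ℤ) : ℝ :=
  (f (((j : ℝ) + 1) * dx) - f ((j : ℝ) * dx)) / dx

section Grid

variable {dx : ℝ} (f : ℝ → ℝ)

theorem plProj_eq_cellAffine (x : ℝ) : plProj dx f x = cellAffine dx f ⌊x / dx⌋ x := rfl

theorem hasDerivAt_cellAffine (j : ℤ) (x : ℝ) :
    HasDerivAt (cellAffine dx f j) (cellSlope dx f j) x := by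
  have h := (((hasDerivAt_id x).sub_const ((j : ℝ) * dx)).div_const dx).mul_const
    (f (((j : ℝ) + 1) * dx) - f ((j : ℝ) * dx)) |>.const_add (f ((j : ℝ) * dx))
  refine h.congr_deriv ?_
  unfold cellSlope; ring

theorem floor_div_eq_of_mem_Ico (hdx : 0 < dx) {j : ℤ} {x : ℝ}
    (hx : x ∈ Ico ((j : ℝ) * dx) (((j : ℝ) + 1) * dx)) : ⌊x / dx⌋ = j := by
  rw [Int.floor_eq_iff, le_div_iff₀ hdx, div_lt_iff₀ hdx]
  exact hx

theorem floor_div_mem_Ico (hdx : 0 < dx) (x : ℝ) :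
    x ∈ Ico ((⌊x / dx⌋ : ℝ) * dx) (((⌊x / dx⌋ : ℝ) + 1) * dx) := by
  rw [mem_Ico, ← le_div_iff₀ hdx, ← div_lt_iff₀ hdx]
  exact ⟨Int.floor_le _, Int.lt_floor_add_one _⟩

theorem ceil_div_sub_one_mem_Ioc (hdx : 0 < dx) (x : ℝ) :
    x ∈ Ioc (((⌈x / dx⌉ - 1 : ℤ) : ℝ) * dx) ((((⌈x / dx⌉ - 1 : ℤ) : ℝ) + 1) * dx) := by
  rw [mem_Ioc, ← lt_div_iff₀ hdx, ← div_le_iff₀ hdx]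
  push_cast
  constructor <;> linarith [Int.ceil_lt_add_one (x / dx), Int.le_ceil (x / dx)]

theorem plProj_eqOn_cellAffine (hdx : 0 < dx) (j : ℤ) :
    EqOn (plProj dx f) (cellAffine dx f j) (Icc ((j : ℝ) * dx) (((j : ℝ) + 1) * dx)) := by
  intro x hx
  rcases hx.2.lt_or_eq with hlt | rfl
  · rw [plProj_eq_cellAffine, floor_div_eq_of_mem_Ico hdx ⟨hx.1, hlt⟩]
  · have hfloor : ⌊((j : ℝ) + 1) * dx / dx⌋ = j + 1 := by
      rw [mul_div_cancel_right₀ _ hdx.ne']; exact_mod_cast Int.floor_intCast (j + 1)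
    simp only [plProj, cellAffine, hfloor]
    push_cast
    field_simp
    ring

theorem hasDerivWithinAt_plProj_Ioi (hdx : 0 < dx) (x : ℝ) :
    HasDerivWithinAt (plProj dx f) (cellSlope dx f ⌊x / dx⌋) (Ioi x) x := by
  obtain ⟨hleft, hright⟩ := floor_div_mem_Ico hdx x
  have hcell := plProj_eqOn_cellAffine f hdx ⌊x / dx⌋
  refine (hasDerivAt_cellAffine f _ x).hasDerivWithinAt.congr_of_eventuallyEq
    (eventuallyEq_of_mem (Ioo_mem_nhdsGT hright) (hcell.mono ?_)) (hcell ⟨hleft, hright.le⟩)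
  exact Ioo_subset_Icc_self.trans (Icc_subset_Icc_left hleft)

theorem hasDerivAt_plProj_of_notMem (hdx : 0 < dx) {x : ℝ}
    (hx : x ∉ range fun j : ℤ => (j : ℝ) * dx) :
    HasDerivAt (plProj dx f) (cellSlope dx f ⌊x / dx⌋) x := by
  obtain ⟨hleft, hright⟩ := floor_div_mem_Ico hdx x
  have hleft' : (⌊x / dx⌋ : ℝ) * dx < x := hleft.lt_of_ne fun h => hx ⟨_, h⟩
  exact (hasDerivAt_cellAffine f _ x).congr_of_eventuallyEq <| eventuallyEq_of_mem
    (Ioo_mem_nhds hleft' hright) ((plProj_eqOn_cellAffine f hdx _).mono Ioo_subset_Icc_self)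

theorem continuous_plProj (hdx : 0 < dx) : Continuous (plProj dx f) := by
  refine continuous_iff_continuousAt.2 fun x => continuousAt_iff_continuous_left_right.2 ⟨?_, ?_⟩
  · obtain ⟨hleft, hright⟩ := ceil_div_sub_one_mem_Ioc hdx x
    have hcell := plProj_eqOn_cellAffine f hdx (⌈x / dx⌉ - 1)
    exact (hasDerivAt_cellAffine f _ x).continuousAt.continuousWithinAt.congr_of_eventuallyEq
      (eventuallyEq_of_mem (Icc_mem_nhdsLE hleft) (hcell.mono (Icc_subset_Icc_right hright)))
      (hcell ⟨hleft.le, hright⟩)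
  · exact continuousWithinAt_Ioi_iff_Ici.1 (hasDerivWithinAt_plProj_Ioi f hdx x).continuousWithinAt

theorem integrableOn_cellSlope (hdx : 0 < dx) (hf : ∀ j, 0 ≤ cellSlope dx f j) (a b : ℝ) :
    IntegrableOn (fun x => cellSlope dx f ⌊x / dx⌋) (Ioc a b) :=
  integrableOn_deriv_right_of_nonneg (continuous_plProj f hdx).continuousOn
    (fun x _ => hasDerivWithinAt_plProj_Ioi f hdx x) fun _ _ => hf _

theorem integral_cellSlope_eq_sub (hdx : 0 < dx) (hf : ∀ j, 0 ≤ cellSlope dx f j) {a b : ℝ}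
    (hab : a ≤ b) :
    ∫ x in a..b, cellSlope dx f ⌊x / dx⌋ = plProj dx f b - plProj dx f a :=
  integral_eq_sub_of_hasDeriv_right_of_le hab (continuous_plProj f hdx).continuousOn
    (fun x _ => hasDerivWithinAt_plProj_Ioi f hdx x)
    ((intervalIntegrable_iff_integrableOn_Ioc_of_le hab).2 (integrableOn_cellSlope f hdx hf a b))

end Grid

theorem projection_preserves_energy_general
    (u ux F : ℝ → ℝ)
    (hux2_int : ∀ a b : ℝ, IntervalIntegrable (fun z => ux z ^ 2) volume a b)
    (hFTC : ∀ a b : ℝ, a ≤ b → u b - u a = ∫ z in a..b, ux z)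
    (hE : ∀ a b : ℝ, a ≤ b → (∫ z in a..b, ux z ^ 2) ≤ F b - F a)
    (dx : ℝ) (hdx : 0 < dx)
    (up' : ℝ → ℝ)
    (hup' : ∀ᵐ x ∂volume, HasDerivAt (plProj dx u) (up' x) x) :
    ∀ a b : ℝ, a ≤ b →
      (∫ z in a..b, up' z ^ 2) ≤ plProj dx F b - plProj dx F a := by
  intro a b hab
  have hslope : ∀ j : ℤ, cellSlope dx u j ^ 2 ≤ cellSlope dx F j := fun j => by
    have hcell : (j : ℝ) * dx < ((j : ℝ) + 1) * dx := by linarith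
    have hlen : ((j : ℝ) + 1) * dx - (j : ℝ) * dx = dx := by ring
    simpa only [cellSlope, hlen] using sq_slope_le_slope_of_sq_integral_le hcell
      (hux2_int _ _) (hFTC _ _ hcell.le) (hE _ _ hcell.le)
  have hup'_sq : ∀ᵐ x, up' x ^ 2 ≤ cellSlope dx F ⌊x / dx⌋ := by
    filter_upwards [hup', (countable_range fun j : ℤ => (j : ℝ) * dx).ae_notMem volume]
      with x hx hgrid
    rw [hx.unique (hasDerivAt_plProj_of_notMem u hdx hgrid)]
    exact hslope _
  have hF : ∀ j, 0 ≤ cellSlope dx F j := fun j => (sq_nonneg _).trans (hslope j)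
  rw [← integral_cellSlope_eq_sub F hdx hF hab, integral_of_le hab, integral_of_le hab]
  exact integral_mono_of_nonneg (ae_of_all _ fun _ => sq_nonneg _)
    (integrableOn_cellSlope F hdx hF a b) (ae_restrict_of_ae hup'_sq)

/-- The piecewise linear projection preserves the energy inequality:
if `∫_a^b ux² ≤ F b - F a` for all `a ≤ b`, then the projected pair satisfies
`∫_a^b (u_p)_x² ≤ F_p b - F_p a` for all `a ≤ b`, where `(u_p)_x` is the a.e. defined
derivative of `u_p = P_{Δx} u`. -/
theorem projection_preserves_energy
    (u ux F : ℝ → ℝ)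
    (hFmono : Monotone F)
    (hux_int : ∀ a b : ℝ, IntervalIntegrable ux volume a b)
    (hux2_int : ∀ a b : ℝ, IntervalIntegrable (fun z => ux z ^ 2) volume a b)
    (hFTC : ∀ a b : ℝ, a ≤ b → u b - u a = ∫ z in a..b, ux z)
    (hE : ∀ a b : ℝ, a ≤ b → (∫ z in a..b, ux z ^ 2) ≤ F b - F a)
    (dx : ℝ) (hdx : 0 < dx)
    (up' : ℝ → ℝ)
    (hup' : ∀ᵐ x ∂volume, HasDerivAt (plProj dx u) (up' x) x) :
    ∀ a b : ℝ, a ≤ b →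
      (∫ z in a..b, up' z ^ 2) ≤ plProj dx F b - plProj dx F a :=
  projection_preserves_energy_general u ux F hux2_int hFTC hE dx hdx up' hup'
end
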